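/- arXiv:1206.5012 — 6 statements merged into one kernel-verified Lean document; each statement's English description precedes it below -/
import Mathlib

section
/- The minimum value of f(θ) = cos θ + cos 2θ + cos 3θ over all real θ is (−17 − 7√7)/27; that is, cos θ + cos 2θ + cos 3θ ≥ (−17 − 7√7)/27 for all real θ, and there exists a real θ attaining this value. -/
/-! With `c = cos θ` the sum is the cubic `4c³ + 2c² - 2c - 1`, whose critical point `(√7 - 1)/6`
lies in `[-1, 1]`. The difference between the cubic and its value there factors as
`(6c + 1 - √7)² (6c + 1 + 2√7) / 54`, which is nonnegative for `c ≥ -1`. -/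

open Real

lemma cos_add_cos_two_mul_add_cos_three_mul (θ : ℝ) :
    cos θ + cos (2 * θ) + cos (3 * θ) = 4 * cos θ ^ 3 + 2 * cos θ ^ 2 - 2 * cos θ - 1 := by
  rw [cos_two_mul, cos_three_mul]
  ring

lemma cubic_sub_min_eq (x : ℝ) :
    4 * x ^ 3 + 2 * x ^ 2 - 2 * x - 1 - (-17 - 7 * √7) / 27 =
      (6 * x + 1 - √7) ^ 2 * (6 * x + 1 + 2 * √7) / 54 := by
  have h7 : √7 ^ 2 = 7 := sq_sqrt (by norm_num)
  have h7' : √7 ^ 3 = 7 * √7 := by rw [pow_succ, h7]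
  ring_nf
  rw [h7, h7']
  ring

lemma five_halves_le_sqrt_seven : 5 / 2 ≤ √7 :=
  le_sqrt_of_sq_le (by norm_num)

lemma sqrt_seven_le_three : √7 ≤ 3 :=
  sqrt_le_iff.mpr ⟨by norm_num, by norm_num⟩

lemma min_le_cubic {x : ℝ} (hx : -1 ≤ x) :
    (-17 - 7 * √7) / 27 ≤ 4 * x ^ 3 + 2 * x ^ 2 - 2 * x - 1 := by
  have hpos : 0 ≤ 6 * x + 1 + 2 * √7 := by linarith [five_halves_le_sqrt_seven]
  have hdiff : 0 ≤ 4 * x ^ 3 + 2 * x ^ 2 - 2 * x - 1 - (-17 - 7 * √7) / 27 := by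
    rw [cubic_sub_min_eq]
    positivity
  linarith

lemma cubic_critical_point_eq_min :
    4 * ((√7 - 1) / 6) ^ 3 + 2 * ((√7 - 1) / 6) ^ 2 - 2 * ((√7 - 1) / 6) - 1 =
      (-17 - 7 * √7) / 27 := by
  have := cubic_sub_min_eq ((√7 - 1) / 6)
  have hzero : 6 * ((√7 - 1) / 6) + 1 - √7 = 0 := by ring
  rw [hzero] at this
  linarith

theorem min_cos_add_cos_two_add_cos_three :
    (∀ θ : ℝ, Real.cos θ + Real.cos (2 * θ) + Real.cos (3 * θ) ≥
      (-17 - 7 * Real.sqrt 7) / 27) ∧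
    (∃ θ : ℝ, Real.cos θ + Real.cos (2 * θ) + Real.cos (3 * θ) =
      (-17 - 7 * Real.sqrt 7) / 27) := by
  refine ⟨fun θ => ?_, ⟨arccos ((√7 - 1) / 6), ?_⟩⟩
  · rw [cos_add_cos_two_mul_add_cos_three_mul]
    exact min_le_cubic (neg_one_le_cos θ)
  · have := five_halves_le_sqrt_seven
    have := sqrt_seven_le_three
    rw [cos_add_cos_two_mul_add_cos_three_mul,
      cos_arccos (by linarith) (by linarith)]
    exact cubic_critical_point_eq_min
end

section
/- Let a₁ < a₂ be relatively prime positive integers with a₂ ≥ 3. Then there exists a real θ such that cos(a₁θ) + cos(a₂θ) ≤ −3/2. -/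
/-!
Put `s = a₁ + a₂` and `θ = 2πk/s`. Since `a₁` is invertible modulo `s`, `k` can be chosen with
`a₁ k ≡ m (mod s)` for any prescribed `m`; then `a₁θ ≡ 2πm/s` and `a₂θ = 2πk - a₁θ ≡ -2πm/s`
modulo `2π`, so both cosines equal `cos (2πm/s)`. Taking `m = ⌈s/2⌉` puts `2πm/s` within `π/s` of
`π`, and `s ≥ 4` makes `s` even or `π/s ≤ π/5`, whence `cos (2πm/s) ≤ -cos (π/5) ≤ -3/4`.
-/

open Real

theorem three_quarters_le_cos_of_abs_le {y : ℝ} (hy : |y| ≤ π / 5) : 3 / 4 ≤ cos y := by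
  have hsqrt5 : (2 : ℝ) ≤ √5 := by
    rw [show (2 : ℝ) = √(2 ^ 2) by simp]; exact Real.sqrt_le_sqrt (by norm_num)
  calc 3 / 4 ≤ cos (π / 5) := by rw [cos_pi_div_five]; linarith
    _ ≤ cos y := by
      rw [← cos_abs y]
      exact cos_le_cos_of_nonneg_of_le_pi (abs_nonneg y) (by linarith [pi_pos]) hy

theorem exists_cos_two_pi_mul_div_le {n : ℕ} (hn : 4 ≤ n) :
    ∃ m : ℤ, cos (2 * π * m / n) ≤ -(3 / 4) := by
  obtain ⟨r, rfl | rfl⟩ := Nat.even_or_odd' n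
  · refine ⟨r, ?_⟩
    have hr : (r : ℝ) ≠ 0 := by norm_cast; omega
    rw [show 2 * π * (r : ℤ) / ((2 * r : ℕ) : ℝ) = π by push_cast; field_simp, cos_pi]
    norm_num
  · refine ⟨r + 1, ?_⟩
    have hr : (2 : ℝ) ≤ r := by norm_cast; omega
    have hpos : (0 : ℝ) < 2 * r + 1 := by positivity
    have hy : |π / (2 * r + 1)| ≤ π / 5 := by
      rw [abs_of_nonneg (by positivity)]
      gcongr; linarith
    rw [show 2 * π * ((r + 1 : ℤ) : ℝ) / ((2 * r + 1 : ℕ) : ℝ) = π / (2 * r + 1) + π by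
      push_cast; field_simp; ring, cos_add_pi]
    linarith [three_quarters_le_cos_of_abs_le hy]

theorem exists_cos_mul_eq_cos_of_isCoprime {a b : ℤ} (hab : IsCoprime a b) (m : ℤ) :
    ∃ θ : ℝ, cos (a * θ) = cos (2 * π * m / (a + b)) ∧
      cos (b * θ) = cos (2 * π * m / (a + b)) := by
  by_cases hs : (a + b : ℝ) = 0
  · exact ⟨0, by simp [hs]⟩
  obtain ⟨u, v, huv⟩ := hab
  have huv' : (u * a + v * b : ℝ) = 1 := by exact_mod_cast huv
  set x : ℝ := 2 * π * m / (a + b)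
  -- `k = m (u - v)` solves `a k ≡ m (mod a + b)`, as `a (u - v) = 1 - v (a + b)`.
  set θ : ℝ := 2 * π * (m * (u - v)) / (a + b)
  have haθ : a * θ = x + (-(m * v) : ℤ) * (2 * π) := by
    simp only [x, θ]
    push_cast
    field_simp
    linear_combination (m : ℝ) * huv'
  have hbθ : b * θ = -x + (m * u : ℤ) * (2 * π) := by
    simp only [x, θ]
    push_cast
    field_simp
    linear_combination -(m : ℝ) * huv'
  exact ⟨θ, by rw [haθ, cos_add_int_mul_two_pi], by rw [hbθ, cos_add_int_mul_two_pi, cos_neg]⟩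

theorem exists_cos_sum_le_neg_three_halves_general (a₁ a₂ : ℕ)
    (hgcd : Nat.gcd a₁ a₂ = 1) (h₂ : 3 ≤ a₂) :
    ∃ θ : ℝ, Real.cos (a₁ * θ) + Real.cos (a₂ * θ) ≤ -3/2 := by
  have ha₁ : a₁ ≠ 0 := by
    rintro rfl
    rw [Nat.gcd_zero_left] at hgcd
    omega
  obtain ⟨m, hm⟩ := exists_cos_two_pi_mul_div_le (n := a₁ + a₂) (by omega)
  obtain ⟨θ, hθ₁, hθ₂⟩ :=
    exists_cos_mul_eq_cos_of_isCoprime (Nat.isCoprime_iff_coprime.mpr hgcd) m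
  push_cast at hm hθ₁ hθ₂
  exact ⟨θ, by linarith⟩

theorem exists_cos_sum_le_neg_three_halves (a₁ a₂ : ℕ) (h₁ : 0 < a₁)
    (h₁₂ : a₁ < a₂) (hgcd : Nat.gcd a₁ a₂ = 1) (h₂ : 3 ≤ a₂) :
    ∃ θ : ℝ, Real.cos (a₁ * θ) + Real.cos (a₂ * θ) ≤ -3/2 :=
  exists_cos_sum_le_neg_three_halves_general a₁ a₂ hgcd h₂
end

section
/- The value −9/8 is the greatest element of the set of all real numbers m such that m = infimum over real θ of cos(a₁θ) + cos(a₂θ) for some positive integers a₁ < a₂. Equivalently: for all positive integers a₁ < a₂, the infimum over θ ∈ ℝ of cos(a₁θ) + cos(a₂θ) is at most −9/8, and this infimum equals −9/8 when (a₁, a₂) = (1, 2). (This says λ(2) = 9/8, where λ(n) = −sup over sets of n distinct positive integers of the minimum of the corresponding cosine polynomial.) -/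
/-! If `a` and `b` are both odd, `θ = π` gives `-2`. Otherwise, after dividing out `gcd a b`,
Bézout gives odd integers `j, l` with `b l - a j = 1`; at `θ = jπ/b` one has `cos (bθ) = -1` and
`aθ = lπ - π/b`, so `cos (aθ) = -cos (π/b) ≤ -1/2` as soon as `b ≥ 3`. The only remaining pair is
`(1, 2)`, where `cos θ + cos 2θ = 2 (cos θ + 1/4)² - 9/8`. -/

open Real

lemma cos_odd_mul_pi_sub {l : ℤ} (hl : Odd l) (x : ℝ) : cos (l * π - x) = -cos x := by
  rw [cos_int_mul_pi_sub, hl.neg_one_zpow, neg_one_mul]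

lemma cos_mul_add_cos_mul_eq_of_sub_eq_one {a b : ℝ} {j l : ℤ} (hb : b ≠ 0) (hj : Odd j)
    (hl : Odd l) (h : b * l - a * j = 1) :
    cos (a * (j * π / b)) + cos (b * (j * π / b)) = -1 - cos (π / b) := by
  have hbθ : b * (j * π / b) = j * π - 0 := by field_simp; ring
  have haθ : a * (j * π / b) = l * π - π / b := by
    field_simp
    linear_combination -h
  rw [hbθ, haθ, cos_odd_mul_pi_sub hl, cos_odd_mul_pi_sub hj, cos_zero]
  ring

lemma half_le_cos_pi_div {b : ℝ} (hb : 3 ≤ b) : 1 / 2 ≤ cos (π / b) := by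
  rw [← cos_pi_div_three]
  apply cos_le_cos_of_nonneg_of_le_pi (by positivity) (by linarith [pi_pos])
  exact div_le_div_of_nonneg_left pi_pos.le (by norm_num) hb

lemma exists_odd_odd_sub_eq_one {a b : ℤ} (hab : IsCoprime a b) (hodd : ¬(Odd a ∧ Odd b)) :
    ∃ j l : ℤ, Odd j ∧ Odd l ∧ b * l - a * j = 1 := by
  obtain ⟨u, v, huv⟩ := hab
  have parity : ∀ a b u v : ZMod 2, u * a + v * b = 1 → ¬(a = 1 ∧ b = 1) →
      (-u = 1 ∧ v = 1) ∨ (-u + b = 1 ∧ v + a = 1) := by decide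
  have huv₂ : (u : ZMod 2) * a + v * b = 1 := by
    exact_mod_cast congrArg (Int.cast : ℤ → ZMod 2) huv
  simp only [← ZMod.intCast_eq_one_iff_odd] at hodd ⊢
  rcases parity a b u v huv₂ hodd with ⟨hj, hl⟩ | ⟨hj, hl⟩
  · exact ⟨-u, v, by exact_mod_cast hj, hl, by linear_combination huv⟩
  · exact ⟨-u + b, v + a, by exact_mod_cast hj, by exact_mod_cast hl, by linear_combination huv⟩

lemma isLeast_range_cos_add_cos_two_mul :
    IsLeast (Set.range fun θ : ℝ => cos θ + cos (2 * θ)) (-9 / 8) := by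
  have key (θ : ℝ) : cos θ + cos (2 * θ) = 2 * (cos θ + 1 / 4) ^ 2 - 9 / 8 := by
    rw [cos_two_mul]; ring
  refine ⟨⟨arccos (-1 / 4), ?_⟩, ?_⟩ <;> simp only [key]
  · rw [cos_arccos (by norm_num) (by norm_num)]
    norm_num
  · rintro _ ⟨θ, rfl⟩
    nlinarith [sq_nonneg (cos θ + 1 / 4)]

lemma bddBelow_range_cos_mul_add_cos_mul (a b : ℝ) :
    BddBelow (Set.range fun θ : ℝ => cos (a * θ) + cos (b * θ)) := by
  refine ⟨-2, ?_⟩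
  rintro _ ⟨θ, rfl⟩
  linarith [neg_one_le_cos (a * θ), neg_one_le_cos (b * θ)]

lemma exists_cos_mul_add_cos_mul_le_of_coprime {a b : ℕ} (ha : 0 < a) (hab : a < b)
    (hcop : a.Coprime b) : ∃ θ : ℝ, cos (a * θ) + cos (b * θ) ≤ -9 / 8 := by
  by_cases hodd : Odd a ∧ Odd b
  · refine ⟨π, ?_⟩
    rw [cos_nat_mul_pi, cos_nat_mul_pi, hodd.1.neg_one_pow, hodd.2.neg_one_pow]
    norm_num
  by_cases hb : b = 2
  · obtain ⟨θ, hθ⟩ := isLeast_range_cos_add_cos_two_mul.1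
    obtain rfl : a = 1 := by omega
    exact ⟨θ, by simpa [hb] using hθ.le⟩
  obtain ⟨j, l, hj, hl, h⟩ := exists_odd_odd_sub_eq_one (Nat.isCoprime_iff_coprime.mpr hcop)
    (by simpa [Int.odd_coe_nat] using hodd)
  have hb3 : (3 : ℝ) ≤ b := by exact_mod_cast (by omega : 3 ≤ b)
  refine ⟨j * π / b, ?_⟩
  rw [cos_mul_add_cos_mul_eq_of_sub_eq_one (by positivity) hj hl (by exact_mod_cast h)]
  linarith [half_le_cos_pi_div hb3]

lemma exists_cos_mul_add_cos_mul_le {a b : ℕ} (ha : 0 < a) (hab : a < b) :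
    ∃ θ : ℝ, cos (a * θ) + cos (b * θ) ≤ -9 / 8 := by
  obtain ⟨g, a, b, hg, hcop, rfl, rfl⟩ := Nat.exists_coprime' (Nat.gcd_pos_of_pos_left b ha)
  obtain ⟨θ, hθ⟩ := exists_cos_mul_add_cos_mul_le_of_coprime (Nat.pos_of_mul_pos_right ha)
    (Nat.lt_of_mul_lt_mul_right hab) hcop
  refine ⟨θ / g, ?_⟩
  have hg' : (g : ℝ) ≠ 0 := by positivity
  convert hθ using 3 <;> push_cast <;> field_simp

theorem lambda_two :
    IsGreatest {m : ℝ | ∃ a₁ a₂ : ℕ, 0 < a₁ ∧ a₁ < a₂ ∧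
      m = ⨅ θ : ℝ, (Real.cos (a₁ * θ) + Real.cos (a₂ * θ))} (-9/8) ∧
    (⨅ θ : ℝ, (Real.cos ((1 : ℕ) * θ) + Real.cos ((2 : ℕ) * θ))) = -9/8 := by
  have h12 : (⨅ θ : ℝ, (Real.cos ((1 : ℕ) * θ) + Real.cos ((2 : ℕ) * θ))) = -9/8 := by
    simpa only [Nat.cast_one, one_mul, Nat.cast_ofNat] using
      isLeast_range_cos_add_cos_two_mul.isGLB.ciInf_eq
  refine ⟨⟨⟨1, 2, one_pos, one_lt_two, h12.symm⟩, ?_⟩, h12⟩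
  rintro _ ⟨a, b, ha, hab, rfl⟩
  obtain ⟨θ, hθ⟩ := exists_cos_mul_add_cos_mul_le ha hab
  exact (ciInf_le (bddBelow_range_cos_mul_add_cos_mul a b) θ).trans hθ
end

section
/- Let a₁ < a₂ < a₃ be positive integers with gcd(a₁, a₂, a₃) = 1. Then there exists a real θ such that cos(a₁θ) + cos(a₂θ) + cos(a₃θ) ≤ (−17 − 7√7)/27. -/
/-!
Write `m = (-17 - 7√7)/27`, the minimum of `cos θ + cos 2θ + cos 3θ`.

If `c ∉ {a + b, 2a, 2b}`, look at `θₖ = (2k+1)π/c` for `k < c`. There `cos cθₖ = -1`, and since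
`c` divides none of `a, b, 2a, 2b, a ± b`, the values `xₖ = cos aθₖ + cos bθₖ` have mean `0` and
mean square `1`. Hence `∑ (2 - xₖ)(xₖ + 1/2) = 0`, which forces some `xₖ ≤ -1/2` (otherwise every
term is `≥ 0` and one with `xₖ ≤ 0` is `> 0`), so the sum is `≤ -3/2 < m` there. If `c = 2a`, the
same argument with `b` in the role of `c` works unless `(a, b) = (3, 4)` or `(2, 3)`.

If `c = a + b` or `c = 2b`, then `a` and `b` are coprime. Choose `bθ` modulo `2π` to minimise the
terms involving `b`; the remaining freedom, a multiple of `2π/b` in `θ`, moves `aθ` over a whole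
coset of `(2π/b)ℤ`, hence to within `π/b` of `π`. This suffices for `b ≥ 5` (resp. `b ≥ 3`); the
finitely many remaining triples are settled by explicit angles, `(1, 2, 3)` being the extremal case.
-/

open Real Finset Polynomial Polynomial.Chebyshev

theorem sum_cos_mul_odd_mul_pi_div_eq_zero (p : ℕ) {n : ℤ} (hn : ¬ (p : ℤ) ∣ n) :
    ∑ k ∈ range p, cos (n * ((2 * k + 1) * π / p)) = 0 := by
  rcases p.eq_zero_or_pos with rfl | hp
  · simp
  have hsin : sin (n * π / p) ≠ 0 := by
    rw [Ne, sin_eq_zero_iff]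
    rintro ⟨m, hm⟩
    field_simp at hm
    exact hn ⟨m, by exact_mod_cast (by linarith : (n : ℝ) = p * m)⟩
  have htel (k : ℕ) : 2 * sin (n * π / p) * cos (n * ((2 * k + 1) * π / p)) =
      sin (n * (2 * (k + 1 : ℕ) * π / p)) - sin (n * (2 * k * π / p)) := by
    rw [two_mul_sin_mul_cos, show (n : ℝ) * π / p - n * ((2 * k + 1) * π / p) =
      -(n * (2 * k * π / p)) by ring, sin_neg]
    push_cast
    ring_nf
  have h2p : (n : ℝ) * (2 * (p : ℕ) * π / p) = (2 * n : ℤ) * π := by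
    push_cast
    field_simp
  have : 2 * sin (n * π / p) * ∑ k ∈ range p, cos (n * ((2 * k + 1) * π / p)) = 0 := by
    rw [mul_sum, sum_congr rfl fun k _ => htel k,
      sum_range_sub (fun k : ℕ => sin (n * (2 * k * π / p))), h2p, sin_int_mul_pi]
    simp
  simpa [hsin] using this

theorem cos_mul_odd_mul_pi_div_self {p : ℕ} (hp : p ≠ 0) (k : ℕ) :
    cos (p * ((2 * k + 1) * π / p)) = -1 := by
  rw [mul_div_cancel₀ _ (Nat.cast_ne_zero.2 hp), ← Nat.cast_ofNat, ← Nat.cast_mul,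
    ← Nat.cast_add_one, cos_nat_mul_pi, (odd_two_mul_add_one k).neg_one_pow]

theorem sq_cos_mul_add_cos_mul (a b t : ℝ) :
    (cos (a * t) + cos (b * t)) ^ 2 =
      1 + cos (2 * a * t) / 2 + cos (2 * b * t) / 2 + cos ((a + b) * t) + cos ((a - b) * t) := by
  rw [mul_assoc 2 a, mul_assoc 2 b, cos_two_mul, cos_two_mul, add_mul, sub_mul, cos_add, cos_sub]
  ring

theorem exists_le_neg_half_of_sum_eq_zero_of_sum_sq_eq_card {ι : Type*} {s : Finset ι}
    (hs : s.Nonempty) {x : ι → ℝ} (hle : ∀ i ∈ s, x i ≤ 2) (hsum : ∑ i ∈ s, x i = 0)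
    (hsq : ∑ i ∈ s, x i ^ 2 = #s) : ∃ i ∈ s, x i ≤ -1 / 2 := by
  by_contra! hgt
  have hzero : ∑ i ∈ s, (2 - x i) * (x i + 1 / 2) = 0 := by
    simp only [show ∀ i, (2 - x i) * (x i + 1 / 2) = 1 + 3 / 2 * x i - x i ^ 2 from
      fun i => by ring, sum_sub_distrib, sum_add_distrib, ← mul_sum, hsum, hsq, sum_const,
      nsmul_eq_mul, mul_one]
    ring
  obtain ⟨i, hi, hxi⟩ := exists_le_of_sum_le hs (hsum.trans (sum_const_zero).symm).le
  refine (sum_pos' (fun j hj => ?_) ⟨i, hi, ?_⟩).ne' hzero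
  · nlinarith [hle j hj, hgt j hj]
  · nlinarith [hgt i hi]

theorem Int.not_dvd_of_lt_of_lt_of_ne {p n k : ℤ} (h₁ : p * k < n) (h₂ : n < p * (k + 2))
    (h₃ : n ≠ p * (k + 1)) : ¬ p ∣ n := by
  rintro ⟨m, rfl⟩
  have hp : 0 < p := by nlinarith
  have := lt_of_mul_lt_mul_left h₁ hp.le
  have := lt_of_mul_lt_mul_left h₂ hp.le
  exact h₃ (by rw [show m = k + 1 by omega])

theorem exists_cos_add_cos_add_cos_le_neg_three_halves {p : ℕ} (hp : 0 < p) {u v : ℤ}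
    (hu : ¬ (p : ℤ) ∣ u) (hv : ¬ (p : ℤ) ∣ v) (h2u : ¬ (p : ℤ) ∣ 2 * u) (h2v : ¬ (p : ℤ) ∣ 2 * v)
    (hadd : ¬ (p : ℤ) ∣ u + v) (hsub : ¬ (p : ℤ) ∣ u - v) :
    ∃ θ : ℝ, cos (u * θ) + cos (v * θ) + cos (p * θ) ≤ -3 / 2 := by
  set θ : ℕ → ℝ := fun k => (2 * k + 1) * π / p
  have hsum {n : ℤ} (hn : ¬ (p : ℤ) ∣ n) : ∑ k ∈ range p, cos (n * θ k) = 0 :=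
    sum_cos_mul_odd_mul_pi_div_eq_zero p hn
  have h2u' := hsum h2u
  have h2v' := hsum h2v
  have hadd' := hsum hadd
  have hsub' := hsum hsub
  push_cast at h2u' h2v' hadd' hsub'
  obtain ⟨k, -, hk⟩ := exists_le_neg_half_of_sum_eq_zero_of_sum_sq_eq_card
    (s := range p) (x := fun k => cos (u * θ k) + cos (v * θ k)) (nonempty_range_iff.2 hp.ne')
    (fun k _ => by linarith [cos_le_one (u * θ k), cos_le_one (v * θ k)])
    (by rw [sum_add_distrib, hsum hu, hsum hv, add_zero])
    (by simp only [sq_cos_mul_add_cos_mul, sum_add_distrib, ← sum_div, h2u', h2v', hadd', hsub']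
        simp)
  exact ⟨θ k, by linarith [cos_mul_odd_mul_pi_div_self hp.ne' k]⟩

theorem exists_int_cos_add_le_neg_cos_pi_div {n : ℕ} (hn : 0 < n) (x : ℝ) :
    ∃ j : ℤ, cos (x + 2 * π * j / n) ≤ -cos (π / n) := by
  have hn' : (0 : ℝ) < n := Nat.cast_pos.2 hn
  set t := (π - x) * n / (2 * π)
  refine ⟨round t, ?_⟩
  set δ := x + 2 * π * round t / n - π
  have hδ : |δ| ≤ π / n := by
    have hδ' : δ = 2 * π / n * (round t - t) := by
      simp only [δ, t]
      field_simp
      ring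
    rw [hδ', abs_mul, abs_of_pos (by positivity), abs_sub_comm]
    calc 2 * π / n * |t - round t| ≤ 2 * π / n * (1 / 2) := by gcongr; exact abs_sub_round t
      _ = π / n := by ring
  have hcos : cos (π / n) ≤ cos δ := by
    rw [← cos_abs δ]
    exact cos_le_cos_of_nonneg_of_le_pi (abs_nonneg δ)
      (div_le_self pi_pos.le (by exact_mod_cast hn)) hδ
  rw [show x + 2 * π * round t / n = δ + π by ring, cos_add_pi]
  linarith

theorem exists_mul_eq_add_int_mul_two_pi_and_cos_add_le {a b : ℕ} (hb : 0 < b)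
    (hab : a.Coprime b) (y φ : ℝ) :
    ∃ θ : ℝ, (∃ r : ℤ, b * θ = y + r * (2 * π)) ∧ cos (a * θ + φ) ≤ -cos (π / b) := by
  obtain ⟨j, hj⟩ := exists_int_cos_add_le_neg_cos_pi_div hb (a * y / b + φ)
  obtain ⟨u, v, huv⟩ := Nat.isCoprime_iff_coprime.2 hab
  have huv' : (u : ℝ) * a + v * b = 1 := by exact_mod_cast huv
  have hb' : (b : ℝ) ≠ 0 := by positivity
  refine ⟨(y + j * u * (2 * π)) / b, ⟨j * u, by push_cast; field_simp⟩, ?_⟩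
  rw [show a * ((y + j * u * (2 * π)) / b) + φ =
      a * y / b + φ + 2 * π * j / b + (-(j * v) : ℤ) * (2 * π) by
    push_cast
    field_simp
    linear_combination (2 * π * j) * huv', cos_add_int_mul_two_pi]
  exact hj

theorem exists_cos_add_cos_add_cos_two_mul_le {a b : ℕ} (hb : 0 < b) (hab : a.Coprime b) :
    ∃ θ : ℝ, cos (a * θ) + cos (b * θ) + cos (2 * b * θ) ≤ -9 / 8 - cos (π / b) := by
  -- cos y + cos 2y = 2 (cos y)² + cos y - 1 is minimal, = -9/8, at cos y = -1/4
  have hy : cos (arccos (-1 / 4)) = -1 / 4 := cos_arccos (by norm_num) (by norm_num)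
  obtain ⟨θ, ⟨r, hr⟩, hθ⟩ := exists_mul_eq_add_int_mul_two_pi_and_cos_add_le hb hab
    (arccos (-1 / 4)) 0
  have hcb : cos (b * θ) = -1 / 4 := by rw [hr, cos_add_int_mul_two_pi, hy]
  have h2b : cos (2 * b * θ) = -7 / 8 := by
    rw [show 2 * b * θ = 2 * arccos (-1 / 4) + (2 * r : ℤ) * (2 * π) by
      push_cast; linear_combination 2 * hr, cos_add_int_mul_two_pi, cos_two_mul, hy]
    norm_num
  rw [add_zero] at hθ
  exact ⟨θ, by linarith⟩

theorem exists_cos_add_cos_add_cos_add_le {a b : ℕ} (hb : 2 ≤ b) (hab : a.Coprime b) :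
    ∃ θ : ℝ, cos (a * θ) + cos (b * θ) + cos ((a + b) * θ) ≤ -1 - cos (π / b) ^ 2 / 2 := by
  set κ := cos (π / b)
  have hκ : 0 ≤ κ := by
    have : 0 < π / b := by positivity
    exact cos_nonneg_of_mem_Icc ⟨by linarith [pi_pos],
      div_le_div_of_nonneg_left pi_pos.le two_pos (by exact_mod_cast hb)⟩
  -- with c = cos (y/2), cos y - 2κc = 2c² - 2κc - 1 is minimal at c = κ/2
  set y := 2 * arccos (κ / 2)
  have hy2 : cos (y / 2) = κ / 2 := by
    rw [mul_div_cancel_left₀ _ two_ne_zero]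
    exact cos_arccos (by linarith) (by linarith [cos_le_one (π / b)])
  have hy : cos y = κ ^ 2 / 2 - 1 := by
    rw [show y = 2 * (y / 2) by ring, cos_two_mul, hy2]
    ring
  obtain ⟨θ, ⟨r, hr⟩, hθ⟩ :=
    exists_mul_eq_add_int_mul_two_pi_and_cos_add_le (by omega) hab y (y / 2)
  have hcb : cos (b * θ) = κ ^ 2 / 2 - 1 := by rw [hr, cos_add_int_mul_two_pi, hy]
  have hpair : cos (a * θ) + cos ((a + b) * θ) = 2 * cos (a * θ + y / 2) * (κ / 2) := by
    rw [add_mul, hr, ← add_assoc, cos_add_int_mul_two_pi, cos_add_cos, ← hy2, ← cos_neg (y / 2)]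
    ring_nf
  have : 2 * cos (a * θ + y / 2) * (κ / 2) ≤ 2 * (-κ) * (κ / 2) := by gcongr
  exact ⟨θ, by linarith⟩

-- Unlike `T_add_two`, this form lets `simp` unfold `T R ((7 : ℕ) : ℤ)`,
-- since ℕ-literals unify with `n + 2`.
theorem Polynomial.Chebyshev.T_natCast_add_two (R : Type*) [CommRing R] (n : ℕ) :
    T R ((n + 2 : ℕ) : ℤ) = 2 * X * T R ((n + 1 : ℕ) : ℤ) - T R (n : ℤ) := by
  push_cast
  exact T_add_two R n

theorem cos_nat_mul_arccos (n : ℕ) {u : ℝ} (hu₁ : -1 ≤ u) (hu₂ : u ≤ 1) :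
    cos (n * arccos u) = (T ℝ n).eval u := by
  rw [← cos_arccos hu₁ hu₂, T_real_cos, arccos_cos (arccos_nonneg _) (arccos_le_pi _)]
  norm_cast

theorem exists_cos_sum_le_of_eval_T (a b c : ℕ) {u m : ℝ} (hu₁ : -1 ≤ u) (hu₂ : u ≤ 1)
    (h : (T ℝ a).eval u + (T ℝ b).eval u + (T ℝ c).eval u ≤ m) :
    ∃ θ : ℝ, cos (a * θ) + cos (b * θ) + cos (c * θ) ≤ m :=
  ⟨arccos u, by rwa [cos_nat_mul_arccos a hu₁ hu₂, cos_nat_mul_arccos b hu₁ hu₂,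
    cos_nat_mul_arccos c hu₁ hu₂]⟩

theorem sqrt_seven_mem_Ioo : √7 ∈ Set.Ioo (2.645 : ℝ) 2.6458 := by
  constructor
  · rw [lt_sqrt (by norm_num)]; norm_num
  · rw [sqrt_lt' (by norm_num)]; norm_num

theorem exists_cos_sum_le_of_mem {a b c : ℕ} (h : (a, b, c) ∈ ({(1, 2, 3), (1, 2, 4), (2, 3, 4),
    (1, 3, 4), (2, 3, 5), (1, 4, 5), (3, 4, 6), (3, 4, 7)} : Finset (ℕ × ℕ × ℕ))) :
    ∃ θ : ℝ, cos (a * θ) + cos (b * θ) + cos (c * θ) ≤ (-17 - 7 * √7) / 27 := by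
  obtain ⟨h7l, h7u⟩ := sqrt_seven_mem_Ioo
  simp only [mem_insert, mem_singleton, Prod.mk.injEq] at h
  rcases h with ⟨rfl, rfl, rfl⟩ | ⟨rfl, rfl, rfl⟩ | ⟨rfl, rfl, rfl⟩ | ⟨rfl, rfl, rfl⟩ |
    ⟨rfl, rfl, rfl⟩ | ⟨rfl, rfl, rfl⟩ | ⟨rfl, rfl, rfl⟩ | ⟨rfl, rfl, rfl⟩
  -- `u = (√7 - 1)/6` minimises `cos θ + cos 2θ + cos 3θ = 4u³ + 2u² - 2u - 1`, `u = cos θ`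
  · refine exists_cos_sum_le_of_eval_T _ _ _ (u := (√7 - 1) / 6) (by linarith) (by linarith) ?_
    simp only [T_natCast_add_two]
    norm_num
    nlinarith [sq_sqrt (show (0 : ℝ) ≤ 7 by norm_num)]
  · exact exists_cos_sum_le_of_eval_T _ _ _ (u := -3 / 5) (by norm_num) (by norm_num)
      (by simp only [T_natCast_add_two]; norm_num; linarith)
  · exact exists_cos_sum_le_of_eval_T _ _ _ (u := 3 / 5) (by norm_num) (by norm_num)
      (by simp only [T_natCast_add_two]; norm_num; linarith)
  · exact exists_cos_sum_le_of_eval_T _ _ _ (u := -43 / 50) (by norm_num) (by norm_num)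
      (by simp only [T_natCast_add_two]; norm_num; linarith)
  · exact exists_cos_sum_le_of_eval_T _ _ _ (u := 7 / 10) (by norm_num) (by norm_num)
      (by simp only [T_natCast_add_two]; norm_num; linarith)
  · exact exists_cos_sum_le_of_eval_T _ _ _ (u := -1 / 2) (by norm_num) (by norm_num)
      (by simp only [T_natCast_add_two]; norm_num; linarith)
  · exact exists_cos_sum_le_of_eval_T _ _ _ (u := 71 / 100) (by norm_num) (by norm_num)
      (by simp only [T_natCast_add_two]; norm_num; linarith)
  · exact exists_cos_sum_le_of_eval_T _ _ _ (u := 69 / 200) (by norm_num) (by norm_num)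
      (by simp only [T_natCast_add_two]; norm_num; linarith)

theorem neg_three_halves_le : -3 / 2 ≤ (-17 - 7 * √7) / 27 := by
  linarith [sqrt_seven_mem_Ioo.2]

theorem coprime_of_gcd_gcd_eq_one {a b c : ℕ} (h : Nat.gcd a (Nat.gcd b c) = 1)
    (hc : Nat.gcd a b ∣ c) : a.Coprime b :=
  Nat.eq_one_of_dvd_one (h ▸ Nat.dvd_gcd (Nat.gcd_dvd_left a b)
    (Nat.dvd_gcd (Nat.gcd_dvd_right a b) hc))

theorem exists_cos_sum_le_of_ne {a b c : ℕ} (ha : 0 < a) (hab : a < b) (hbc : b < c)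
    (h₁ : c ≠ a + b) (h₂ : c ≠ 2 * a) (h₃ : c ≠ 2 * b) :
    ∃ θ : ℝ, cos (a * θ) + cos (b * θ) + cos (c * θ) ≤ -3 / 2 := by
  obtain ⟨θ, hθ⟩ := exists_cos_add_cos_add_cos_le_neg_three_halves (p := c) (u := a) (v := b)
    (by omega) (Int.not_dvd_of_lt_of_lt_of_ne (k := 0) (by omega) (by omega) (by omega))
    (Int.not_dvd_of_lt_of_lt_of_ne (k := 0) (by omega) (by omega) (by omega))
    (Int.not_dvd_of_lt_of_lt_of_ne (k := 0) (by omega) (by omega) (by omega))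
    (Int.not_dvd_of_lt_of_lt_of_ne (k := 0) (by omega) (by omega) (by omega))
    (Int.not_dvd_of_lt_of_lt_of_ne (k := 0) (by omega) (by omega) (by omega))
    (Int.not_dvd_of_lt_of_lt_of_ne (k := -1) (by omega) (by omega) (by omega))
  exact ⟨θ, by exact_mod_cast hθ⟩

theorem exists_cos_sum_le_of_eq_two_mul_left {a b : ℕ} (hab : a < b) (hba : b < 2 * a)
    (hco : a.Coprime b) :
    ∃ θ : ℝ, cos (a * θ) + cos (b * θ) + cos ((2 * a : ℕ) * θ) ≤ (-17 - 7 * √7) / 27 := by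
  by_cases hsmall : 4 * a = 3 * b ∨ 3 * a = 2 * b
  · apply exists_cos_sum_le_of_mem
    have hb4 : b ≤ 4 := by
      rcases hsmall with h | h
      · exact Nat.le_of_dvd four_pos (hco.symm.dvd_of_dvd_mul_right ⟨3, by omega⟩)
      · exact (Nat.le_of_dvd three_pos (hco.symm.dvd_of_dvd_mul_right ⟨2, by omega⟩)).trans
          (by norm_num)
    obtain ⟨rfl, rfl⟩ | ⟨rfl, rfl⟩ : a = 3 ∧ b = 4 ∨ a = 2 ∧ b = 3 := by
      interval_cases b <;> omega
    all_goals decide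
  obtain ⟨θ, hθ⟩ := exists_cos_add_cos_add_cos_le_neg_three_halves (p := b) (u := a) (v := 2 * a)
    (by omega) (Int.not_dvd_of_lt_of_lt_of_ne (k := 0) (by omega) (by omega) (by omega))
    (Int.not_dvd_of_lt_of_lt_of_ne (k := 0) (by omega) (by omega) (by omega))
    (Int.not_dvd_of_lt_of_lt_of_ne (k := 0) (by omega) (by omega) (by omega))
    (Int.not_dvd_of_lt_of_lt_of_ne (k := 2) (by omega) (by omega) (by omega))
    (Int.not_dvd_of_lt_of_lt_of_ne (k := 1) (by omega) (by omega) (by omega))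
    (Int.not_dvd_of_lt_of_lt_of_ne (k := -1) (by omega) (by omega) (by omega))
  refine ⟨θ, le_trans ?_ neg_three_halves_le⟩
  push_cast at hθ ⊢
  linarith

theorem neg_one_sub_cos_pi_div_sq_le {b : ℕ} (hb : 5 ≤ b) :
    -1 - cos (π / b) ^ 2 / 2 ≤ (-17 - 7 * √7) / 27 := by
  have hcos : (1 + √5) / 4 ≤ cos (π / b) := by
    rw [← cos_pi_div_five]
    exact cos_le_cos_of_nonneg_of_le_pi (by positivity) (div_le_self pi_pos.le (by norm_num))
      (div_le_div_of_nonneg_left pi_pos.le (by norm_num) (by exact_mod_cast hb))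
  have h5 : 2.236 < √5 := by
    rw [lt_sqrt (by norm_num)]
    norm_num
  nlinarith [sqrt_seven_mem_Ioo.2]

theorem exists_cos_sum_le_of_eq_add {a b : ℕ} (ha : 0 < a) (hab : a < b) (hco : a.Coprime b) :
    ∃ θ : ℝ, cos (a * θ) + cos (b * θ) + cos ((a + b : ℕ) * θ) ≤ (-17 - 7 * √7) / 27 := by
  rcases lt_or_ge b 5 with hb | hb
  · apply exists_cos_sum_le_of_mem
    interval_cases b <;> interval_cases a <;> first | decide | exact absurd hco (by decide)
  obtain ⟨θ, hθ⟩ := exists_cos_add_cos_add_cos_add_le (by omega) hco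
  refine ⟨θ, le_trans ?_ (neg_one_sub_cos_pi_div_sq_le hb)⟩
  push_cast
  exact hθ

theorem exists_cos_sum_le_of_eq_two_mul_right {a b : ℕ} (ha : 0 < a) (hab : a < b)
    (hco : a.Coprime b) :
    ∃ θ : ℝ, cos (a * θ) + cos (b * θ) + cos ((2 * b : ℕ) * θ) ≤ (-17 - 7 * √7) / 27 := by
  rcases lt_or_ge b 3 with hb | hb
  · obtain ⟨rfl, rfl⟩ : a = 1 ∧ b = 2 := by omega
    exact exists_cos_sum_le_of_mem (by decide)
  obtain ⟨θ, hθ⟩ := exists_cos_add_cos_add_cos_two_mul_le (by omega) hco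
  have hcos : 1 / 2 ≤ cos (π / b) := by
    rw [← cos_pi_div_three]
    exact cos_le_cos_of_nonneg_of_le_pi (by positivity) (div_le_self pi_pos.le (by norm_num))
      (div_le_div_of_nonneg_left pi_pos.le (by norm_num) (by exact_mod_cast hb))
  refine ⟨θ, le_trans ?_ neg_three_halves_le⟩
  push_cast
  linarith

theorem exists_cos_sum_three_le (a₁ a₂ a₃ : ℕ) (h₁ : 0 < a₁)
    (h₁₂ : a₁ < a₂) (h₂₃ : a₂ < a₃) (hgcd : Nat.gcd a₁ (Nat.gcd a₂ a₃) = 1) :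
    ∃ θ : ℝ, Real.cos (a₁ * θ) + Real.cos (a₂ * θ) + Real.cos (a₃ * θ) ≤
      (-17 - 7 * Real.sqrt 7) / 27 := by
  by_cases hsum : a₃ = a₁ + a₂
  · subst hsum
    exact exists_cos_sum_le_of_eq_add h₁ h₁₂ (coprime_of_gcd_gcd_eq_one hgcd
      (Nat.dvd_add (Nat.gcd_dvd_left _ _) (Nat.gcd_dvd_right _ _)))
  by_cases h2b : a₃ = 2 * a₂
  · subst h2b
    exact exists_cos_sum_le_of_eq_two_mul_right h₁ h₁₂ (coprime_of_gcd_gcd_eq_one hgcd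
      (dvd_mul_of_dvd_right (Nat.gcd_dvd_right _ _) 2))
  by_cases h2a : a₃ = 2 * a₁
  · subst h2a
    exact exists_cos_sum_le_of_eq_two_mul_left h₁₂ h₂₃ (coprime_of_gcd_gcd_eq_one hgcd
      (dvd_mul_of_dvd_right (Nat.gcd_dvd_left _ _) 2))
  obtain ⟨θ, hθ⟩ := exists_cos_sum_le_of_ne h₁ h₁₂ h₂₃ hsum h2a h2b
  exact ⟨θ, hθ.trans neg_three_halves_le⟩
end

section
/- Let a₁ < a₂ < a₃ be positive integers with gcd(a₁, a₂, a₃) = 1 and with a₃ = 2a₁ or a₃ = 2a₂. Then there exists a real θ such that cos(a₁θ) + cos(a₂θ) + cos(a₃θ) ≤ −3/2. -/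
/-!
Let `a` be the exponent whose double also occurs and `b` the remaining one; they are coprime.
Take `θ = 2πx/(3a)` with `3 ∤ x`: then `aθ` and `2aθ` are nonzero multiples of `2π/3`
modulo `2π`. Bézout lets us also choose `x` so that `bx mod 3a` lies in `[a, 2a]`, i.e. `bθ`
lies in `[2π/3, 4π/3]` modulo `2π`. All three cosines are then at most `-1/2`.
-/

open Real

lemma cos_le_neg_half_of_mem_Icc {x : ℝ} (h₁ : 2 * π / 3 ≤ x) (h₂ : x ≤ 4 * π / 3) :
    cos x ≤ -1 / 2 := by
  have hdist : |x - π| ≤ π / 3 := abs_le.mpr ⟨by linarith, by linarith⟩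
  have hcos : cos (π / 3) ≤ cos (x - π) := by
    rw [← cos_abs (x - π)]
    exact cos_le_cos_of_nonneg_of_le_pi (abs_nonneg _) (by linarith [pi_pos]) hdist
  rw [cos_pi_div_three, cos_sub_pi] at hcos
  linarith

lemma cos_two_pi_mul_div_le_neg_half {k n : ℤ} (hn : 0 < n)
    (h₁ : n ≤ 3 * (k % n)) (h₂ : 3 * (k % n) ≤ 2 * n) :
    cos (2 * π * k / n) ≤ -1 / 2 := by
  have hnR : (0 : ℝ) < n := by exact_mod_cast hn
  have hk : (k : ℝ) = (k % n : ℤ) + n * (k / n : ℤ) := by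
    exact_mod_cast (Int.emod_add_mul_ediv k n).symm
  have hsplit : 2 * π * k / n = 2 * π * (k % n : ℤ) / n + (k / n : ℤ) * (2 * π) := by
    rw [hk]; field_simp
  have h₁R : (n : ℝ) ≤ 3 * (k % n : ℤ) := by exact_mod_cast h₁
  have h₂R : 3 * ((k % n : ℤ) : ℝ) ≤ 2 * n := by exact_mod_cast h₂
  rw [hsplit, cos_add_int_mul_two_pi]
  apply cos_le_neg_half_of_mem_Icc
  · rw [div_le_div_iff₀ (by norm_num) hnR]; nlinarith [pi_pos]
  · rw [div_le_div_iff₀ hnR (by norm_num)]; nlinarith [pi_pos]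

lemma Int.exists_mul_modEq_of_isCoprime {b n : ℤ} (h : IsCoprime b n) (r : ℤ) :
    ∃ x, b * x ≡ r [ZMOD n] := by
  obtain ⟨u, v, huv⟩ := h
  refine ⟨u * r, (Int.modEq_iff_dvd.mpr ⟨-(v * r), ?_⟩).symm⟩
  linear_combination r * huv

lemma exists_not_three_dvd_and_mul_emod_mem_Icc {a b : ℤ} (ha : 2 ≤ a) (hab : IsCoprime a b) :
    ∃ x, ¬ 3 ∣ x ∧ a ≤ b * x % (3 * a) ∧ b * x % (3 * a) ≤ 2 * a := by
  by_cases hb : 3 ∣ b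
  · obtain ⟨b', rfl⟩ := hb
    -- `x = 1 + 3y` with `b'x ≡ ⌈a/3⌉ [ZMOD a]`, solvable since `3b'` is a unit mod `a`
    obtain ⟨y, hy⟩ := Int.exists_mul_modEq_of_isCoprime hab.symm ((a + 2) / 3 - b')
    have hmod : b' * (1 + 3 * y) % a = (a + 2) / 3 := by
      have : b' * (1 + 3 * y) ≡ (a + 2) / 3 [ZMOD a] := by
        convert hy.add_left b' using 1 <;> ring
      rw [this, Int.emod_eq_of_lt (by omega) (by omega)]
    refine ⟨1 + 3 * y, by omega, ?_⟩
    rw [mul_assoc, Int.mul_emod_mul_of_pos _ _ (by norm_num), hmod]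
    omega
  · have hb3 : IsCoprime b 3 :=
      ((Irreducible.coprime_iff_not_dvd Int.prime_three.irreducible).mpr hb).symm
    obtain ⟨r, hr3, hra, hr2a⟩ : ∃ r, ¬ 3 ∣ r ∧ a ≤ r ∧ r ≤ 2 * a :=
      if h : 3 ∣ a then ⟨a + 1, by omega, by omega, by omega⟩ else ⟨a, h, le_rfl, by omega⟩
    obtain ⟨x, hx⟩ := Int.exists_mul_modEq_of_isCoprime (hb3.mul_right hab.symm) r
    have hbx : b * x % (3 * a) = r := by rw [hx, Int.emod_eq_of_lt (by omega) (by omega)]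
    refine ⟨x, fun h3x => hr3 ?_, by omega, by omega⟩
    have h3bx : 3 ∣ b * x := dvd_mul_of_dvd_right h3x b
    have hx3 : b * x % 3 = r % 3 := hx.of_mul_right a
    omega

lemma exists_cos_le_neg_half_of_isCoprime {a b : ℤ} (ha : 2 ≤ a) (hab : IsCoprime a b) :
    ∃ θ : ℝ, cos (a * θ) ≤ -1 / 2 ∧ cos (2 * a * θ) ≤ -1 / 2 ∧ cos (b * θ) ≤ -1 / 2 := by
  obtain ⟨x, hx3, hlo, hhi⟩ := exists_not_three_dvd_and_mul_emod_mem_Icc ha hab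
  have haR : (a : ℝ) ≠ 0 := by exact_mod_cast (by omega : a ≠ 0)
  refine ⟨2 * π * x / (3 * a), ?_, ?_, ?_⟩
  · convert cos_two_pi_mul_div_le_neg_half (k := x) (n := 3) (by norm_num) (by omega) (by omega)
      using 2
    push_cast; field_simp
  · convert cos_two_pi_mul_div_le_neg_half (k := 2 * x) (n := 3) (by norm_num) (by omega)
      (by omega) using 2
    push_cast; field_simp
  · convert cos_two_pi_mul_div_le_neg_half (k := b * x) (n := 3 * a) (by omega) (by omega)
      (by omega) using 2
    push_cast; field_simp

theorem case_two_exists_cos_sum_le (a₁ a₂ a₃ : ℕ) (h₁ : 0 < a₁)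
    (h₁₂ : a₁ < a₂) (h₂₃ : a₂ < a₃)
    (hgcd : Nat.gcd a₁ (Nat.gcd a₂ a₃) = 1)
    (hcase : a₃ = 2 * a₁ ∨ a₃ = 2 * a₂) :
    ∃ θ : ℝ, Real.cos (a₁ * θ) + Real.cos (a₂ * θ) + Real.cos (a₃ * θ) ≤
      -3/2 := by
  have hcop : IsCoprime (a₁ : ℤ) a₂ := by
    refine Nat.isCoprime_iff_coprime.mpr (Nat.dvd_one.mp (hgcd ▸ ?_))
    refine Nat.dvd_gcd (Nat.gcd_dvd_left _ _) (Nat.dvd_gcd (Nat.gcd_dvd_right _ _) ?_)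
    rcases hcase with rfl | rfl
    · exact (Nat.gcd_dvd_left _ _).mul_left 2
    · exact (Nat.gcd_dvd_right _ _).mul_left 2
  rcases hcase with rfl | rfl
  · obtain ⟨θ, h₁θ, h₃θ, h₂θ⟩ := exists_cos_le_neg_half_of_isCoprime (by omega) hcop
    refine ⟨θ, ?_⟩
    push_cast at *
    linarith
  · obtain ⟨θ, h₂θ, h₃θ, h₁θ⟩ := exists_cos_le_neg_half_of_isCoprime (by omega) hcop.symm
    refine ⟨θ, ?_⟩
    push_cast at *
    linarith
end

section
/- Let a and b be positive integers with a > 2, b < 2a, b ≠ a, and gcd(a, b) = 1. Then there exists a real θ such that cos(aθ) + cos(bθ) + cos(2aθ) ≤ −13/8. -/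
/-! Take `a θ ≡ arccos (-1/4) (mod 2π)`, so that `cos (a θ) = -1/4` and `cos (2 a θ) = -7/8`.
The `a` admissible values of `θ` modulo `2π` differ by multiples of `2π / a`; since `b` is
coprime to `a`, the corresponding values of `b θ` run through a full coset of `(2π / a) ℤ`
modulo `2π`. As `a ≥ 3`, one of them lies in `[2π/3, 4π/3]`, where `cos (b θ) ≤ -1/2`. -/

open Real

theorem exists_mul_eq_add_int_mul_two_pi_and_cos_mul_le_neg_half (a b : ℕ) (ha : 3 ≤ a)
    (hab : Nat.Coprime a b) (x : ℝ) :
    ∃ θ : ℝ, ∃ m : ℤ, a * θ = x + m * (2 * π) ∧ cos (b * θ) ≤ -1 / 2 := by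
  have ha' : (3 : ℝ) ≤ a := by exact_mod_cast ha
  obtain ⟨j, ⟨hj₁, hj₂⟩, -⟩ :=
    existsUnique_add_zsmul_mem_Ico two_pi_pos (b * x) (a * (2 * π / 3))
  rw [zsmul_eq_mul] at hj₁ hj₂
  obtain ⟨u, v, huv⟩ : IsCoprime (a : ℤ) b := Nat.isCoprime_iff_coprime.2 hab
  -- Bezout: `b (v j) = j - a (u j)`, so `θ = (x + 2π v j) / a` moves `b θ` by `2π j / a`.
  have hbezout : (b : ℝ) * (v * j : ℤ) = j + a * (-(u * j) : ℤ) := by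
    push_cast; linear_combination (j : ℝ) * (by exact_mod_cast huv : (u : ℝ) * a + v * b = 1)
  refine ⟨(x + (v * j : ℤ) * (2 * π)) / a, v * j, by field_simp, ?_⟩
  have hbθ : (b : ℝ) * ((x + (v * j : ℤ) * (2 * π)) / a)
      = (b * x + j * (2 * π)) / a + (-(u * j) : ℤ) * (2 * π) := by
    field_simp
    linear_combination (2 * π) * hbezout
  rw [hbθ, cos_add_int_mul_two_pi]
  apply cos_le_neg_half_of_mem_Icc
  · rw [le_div_iff₀ (by linarith)]; linarith
  · rw [div_le_iff₀ (by linarith)]; nlinarith [pi_pos]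

theorem exists_cos_sum_le_neg_thirteen_eighths_general (a b : ℕ) (ha : 2 < a)
    (hgcd : Nat.gcd a b = 1) :
    ∃ θ : ℝ, Real.cos (a * θ) + Real.cos (b * θ) + Real.cos (2 * a * θ) ≤
      -13/8 := by
  obtain ⟨θ, m, hθ, hbθ⟩ :=
    exists_mul_eq_add_int_mul_two_pi_and_cos_mul_le_neg_half a b ha hgcd (arccos (-1 / 4))
  have hx : cos (arccos (-1 / 4)) = -1 / 4 := cos_arccos (by norm_num) (by norm_num)
  have haθ : cos (a * θ) = -1 / 4 := by rw [hθ, cos_add_int_mul_two_pi, hx]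
  have h2aθ : cos (2 * a * θ) = -7 / 8 := by
    have : 2 * a * θ = 2 * arccos (-1 / 4) + (2 * m : ℤ) * (2 * π) := by
      push_cast; linear_combination 2 * hθ
    rw [this, cos_add_int_mul_two_pi, cos_two_mul, hx]
    norm_num
  exact ⟨θ, by linarith⟩

theorem exists_cos_sum_le_neg_thirteen_eighths (a b : ℕ) (ha : 2 < a)
    (hb : 0 < b) (hb2a : b < 2 * a) (hba : b ≠ a) (hgcd : Nat.gcd a b = 1) :
    ∃ θ : ℝ, Real.cos (a * θ) + Real.cos (b * θ) + Real.cos (2 * a * θ) ≤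
      -13/8 :=
  exists_cos_sum_le_neg_thirteen_eighths_general a b ha hgcd
end
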